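/- arXiv:1909.00538 — 6 statements merged into one kernel-verified Lean document; each statement's English description precedes it below -/
import Mathlib

section
/- Let G be a Lie group acting smoothly on a smooth manifold M, and let ψ : M → 𝔤 be an infinitesimal gauge transformation. Then the induced vector field ∂(ψ), defined by ∂(ψ)(m) := T ev_m(ψ(m)), is a smooth vector field on M (smooth as a map M → TM) and is G-equivariant: for all g ∈ G and m ∈ M, ∂(ψ)(g·m) = T(g·)(∂(ψ)(m)). -/
open scoped Manifold

/-!
In a chart around `x₀`, `x ↦ T₁(h ↦ h • x)` is the partial derivative of the action at `(1, x)`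
in the group variable, so it is `C^k` when the action is `C^(k+1)`; applying it to the smooth `ψ`
gives smoothness of `∂(ψ)`. Equivariance is the chain rule applied to the identity
`(g h g⁻¹) • (g • x) = g • (h • x)` at `h = 1`, combined with `ψ (g • x) = Ad(g) (ψ x)`.
-/

section

variable {𝕜 : Type*} [NontriviallyNormedField 𝕜]
  {EG : Type*} [NormedAddCommGroup EG] [NormedSpace 𝕜 EG]
  {HG : Type*} [TopologicalSpace HG] {IG : ModelWithCorners 𝕜 EG HG}
  {G : Type*} [TopologicalSpace G] [ChartedSpace HG G]
  {EM : Type*} [NormedAddCommGroup EM] [NormedSpace 𝕜 EM]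
  {HM : Type*} [TopologicalSpace HM] {IM : ModelWithCorners 𝕜 EM HM}
  {M : Type*} [TopologicalSpace M] [ChartedSpace HM M]

theorem contMDiff_mfderiv_orbit_section [IsManifold IG 1 G] [IsManifold IM 1 M]
    [Monoid G] [MulAction G M] {n k : WithTop ℕ∞} [ContMDiffSMul IG IM n G M]
    {ψ : M → EG} (hψ : ContMDiff IM 𝓘(𝕜, EG) k ψ) (hkn : k + 1 ≤ n) :
    ContMDiff IM IM.tangent k fun x : M =>
      (⟨x, mfderiv IG IM (fun h : G => h • x) 1 (ψ x)⟩ : TangentBundle IM M) := by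
  intro x₀
  have hD := ContMDiffAt.mfderiv_apply (I := IG) (I' := IM) (fun (x : M) (h : G) => h • x)
    (fun _ => (1 : G)) id ψ (x₀ := x₀) (contMDiff_snd.smul contMDiff_fst).contMDiffAt
    contMDiffAt_const contMDiffAt_id hψ.contMDiffAt hkn
  rw [Bundle.contMDiffAt_totalSpace]
  refine ⟨contMDiffAt_id, hD.congr_of_eventuallyEq ?_⟩
  -- the base point in `G` is frozen at `1`, so the chart change on the `G` side is trivial
  have hself : ∀ v : EG, (tangentBundleCore IG G).coordChange (achart HG 1) (achart HG 1) 1 v = v :=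
    (tangentBundleCore IG G).coordChange_self (achart HG 1) 1 (mem_achart_source HG 1)
  filter_upwards [(chartAt HM x₀).open_source.mem_nhds (mem_chart_source HM x₀)] with x hx
  simp only [one_smul, id]
  erw [inTangentCoordinates_eq (I := IG) (I' := IM) (fun _ : M => (1 : G)) (fun x : M => x) _
    (mem_chart_source HG (1 : G)) hx]
  simp only [ContinuousLinearMap.comp_apply]
  exact congrArg _ (congrArg (mfderiv IG IM (fun h : G => h • x) 1) (hself (ψ x))).symm

theorem mfderiv_orbit_smul_conj_apply [Group G] [ContMDiffMul IG 1 G] [MulAction G M]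
    [ContMDiffSMul IG IM 1 G M] (g : G) (x : M) (v : TangentSpace IG (1 : G)) :
    mfderiv IG IM (fun h : G => h • g • x) 1 (mfderiv IG IG (fun h : G => g * h * g⁻¹) 1 v) =
      mfderiv IM IM (fun p : M => g • p) x (mfderiv IG IM (fun h : G => h • x) 1 v) := by
  have horbit (y : M) : MDifferentiable IG IM fun h : G => h • y :=
    (contMDiff_id.smul contMDiff_const).mdifferentiable one_ne_zero
  have hconj : MDifferentiableAt IG IG (fun h : G => g * h * g⁻¹) 1 :=
    mdifferentiableAt_mul_right.comp 1 mdifferentiableAt_mul_left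
  have hcomm : (fun h : G => h • g • x) ∘ (fun h : G => g * h * g⁻¹) =
      (fun p : M => g • p) ∘ (fun h : G => h • x) := by
    funext h
    simp [mul_smul]
  have hleft := mfderiv_comp_apply_of_eq 1 (horbit (g • x) 1) hconj (by simp) v
  have hright := mfderiv_comp_apply_of_eq 1
    ((ContMDiffSMul.contMDiff_const_smul (I := IG) g).mdifferentiable one_ne_zero x) (horbit x 1)
    (one_smul G x) v
  rw [hcomm] at hleft
  exact hleft.symm.trans hright

end

theorem induced_vector_field_smooth_and_equivariant_general
    {EG : Type*} [NormedAddCommGroup EG] [NormedSpace ℝ EG]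
    {HG : Type*} [TopologicalSpace HG] {IG : ModelWithCorners ℝ EG HG}
    {G : Type*} [TopologicalSpace G] [ChartedSpace HG G] [Group G]
    [LieGroup IG (⊤ : ℕ∞) G]
    {EM : Type*} [NormedAddCommGroup EM] [NormedSpace ℝ EM]
    {HM : Type*} [TopologicalSpace HM] {IM : ModelWithCorners ℝ EM HM}
    {M : Type*} [TopologicalSpace M] [ChartedSpace HM M] [IsManifold IM (⊤ : ℕ∞) M]
    [MulAction G M]
    (hact : ContMDiff (IG.prod IM) IM (⊤ : ℕ∞) fun p : G × M => p.1 • p.2)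
    (ψ : M → EG)
    (hψ_smooth : ContMDiff IM 𝓘(ℝ, EG) (⊤ : ℕ∞) ψ)
    (hψ_equiv : ∀ (g : G) (m : M),
      ψ (g • m) = mfderiv IG IG (fun h : G => g * h * g⁻¹) (1 : G) (ψ m)) :
    ContMDiff IM IM.tangent (⊤ : ℕ∞)
        (fun m : M =>
          (⟨m, mfderiv IG IM (fun g : G => g • m) (1 : G) (ψ m)⟩ : TangentBundle IM M)) ∧
      ∀ (g : G) (m : M),
        mfderiv IG IM (fun g' : G => g' • (g • m)) (1 : G) (ψ (g • m)) =
          mfderiv IM IM (fun p : M => g • p) m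
            (mfderiv IG IM (fun g' : G => g' • m) (1 : G) (ψ m)) := by
  have : ContMDiffSMul IG IM (⊤ : ℕ∞) G M := ⟨hact⟩
  refine ⟨contMDiff_mfderiv_orbit_section (n := (⊤ : ℕ∞)) hψ_smooth (by simp), fun g m => ?_⟩
  rw [hψ_equiv g m]
  exact mfderiv_orbit_smul_conj_apply g m (ψ m)

/-- Let `G` be a Lie group acting smoothly on a smooth manifold `M`, and let
`ψ : M → 𝔤` be an infinitesimal gauge transformation (a smooth map that is equivariant with
respect to the adjoint action, `ψ (g • m) = Ad(g) (ψ m)`).  Then the induced vector field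
`∂(ψ) : m ↦ T ev_m (ψ m)` is a smooth vector field on `M` (smooth as a section `M → TM`) and is
`G`-equivariant: `∂(ψ)(g • m) = T(g •) (∂(ψ)(m))`. -/
theorem induced_vector_field_smooth_and_equivariant
    {EG : Type*} [NormedAddCommGroup EG] [NormedSpace ℝ EG]
    {HG : Type*} [TopologicalSpace HG] {IG : ModelWithCorners ℝ EG HG}
    {G : Type*} [TopologicalSpace G] [ChartedSpace HG G] [Group G]
    [IsManifold IG (⊤ : ℕ∞) G] [LieGroup IG (⊤ : ℕ∞) G]
    {EM : Type*} [NormedAddCommGroup EM] [NormedSpace ℝ EM]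
    {HM : Type*} [TopologicalSpace HM] {IM : ModelWithCorners ℝ EM HM}
    {M : Type*} [TopologicalSpace M] [ChartedSpace HM M] [IsManifold IM (⊤ : ℕ∞) M]
    [MulAction G M]
    (hact : ContMDiff (IG.prod IM) IM (⊤ : ℕ∞) fun p : G × M => p.1 • p.2)
    (ψ : M → EG)
    (hψ_smooth : ContMDiff IM 𝓘(ℝ, EG) (⊤ : ℕ∞) ψ)
    (hψ_equiv : ∀ (g : G) (m : M),
      ψ (g • m) = mfderiv IG IG (fun h : G => g * h * g⁻¹) (1 : G) (ψ m)) :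
    ContMDiff IM IM.tangent (⊤ : ℕ∞)
        (fun m : M =>
          (⟨m, mfderiv IG IM (fun g : G => g • m) (1 : G) (ψ m)⟩ : TangentBundle IM M)) ∧
      ∀ (g : G) (m : M),
        mfderiv IG IM (fun g' : G => g' • (g • m)) (1 : G) (ψ (g • m)) =
          mfderiv IM IM (fun p : M => g • p) m
            (mfderiv IG IM (fun g' : G => g' • m) (1 : G) (ψ m)) :=
  induced_vector_field_smooth_and_equivariant_general hact ψ hψ_smooth hψ_equiv
end

section
/- Let G be a Lie group acting smoothly on a smooth manifold M, let X be a G-equivariant vector field on M, let m ∈ M be a relative equilibrium of X with velocity ξ ∈ 𝔤 (X(m) = T ev_m(ξ)), and let γ : ℝ → G be a smooth group homomorphism with derivative ξ at 0 (i.e. the differential of γ at 0 sends 1 ∈ T₀ℝ ≅ ℝ to ξ; γ plays the role of τ ↦ exp(τξ)). Then the curve τ ↦ γ(τ)·m is the integral curve of X starting at m: for every τ ∈ ℝ, its derivative at τ equals X(γ(τ)·m). -/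
open scoped Manifold

/-! Because `γ` is a homomorphism, the orbit curve `c τ = γ τ • m` satisfies
`c (t + s) = γ t • c s`: near any time `t` it is the translate by `γ t` of the curve near `0`.
At `0` the chain rule and the relative-equilibrium condition give `c' 0 = T ev_m ξ = X m`, and
equivariance of `X` carries this tangency to every `t`. -/

section Curves

variable
  {E : Type*} [NormedAddCommGroup E] [NormedSpace ℝ E]
  {H : Type*} [TopologicalSpace H] {I : ModelWithCorners ℝ E H}
  {M : Type*} [TopologicalSpace M] [ChartedSpace H M]
  {E' : Type*} [NormedAddCommGroup E'] [NormedSpace ℝ E']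
  {H' : Type*} [TopologicalSpace H'] {I' : ModelWithCorners ℝ E' H'}
  {N : Type*} [TopologicalSpace N] [ChartedSpace H' N]

theorem HasMFDerivAt.comp_sub_const {c : ℝ → M} {s t : ℝ}
    {L : ℝ →L[ℝ] TangentSpace I (c (s - t))} (hc : HasMFDerivAt 𝓘(ℝ, ℝ) I c (s - t) L) :
    HasMFDerivAt 𝓘(ℝ, ℝ) I (fun τ => c (τ - t)) s L := by
  have hshift : HasMFDerivAt 𝓘(ℝ, ℝ) 𝓘(ℝ, ℝ) (· - t) s (ContinuousLinearMap.id ℝ ℝ) :=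
    hasMFDerivAt_iff_hasFDerivAt.mpr ((hasFDerivAt_id s).sub_const t)
  exact hc.comp s hshift

theorem MDifferentiableAt.hasMFDerivAt_comp_curve {f : N → M} {c : ℝ → N} {t : ℝ}
    (hf : MDifferentiableAt I' I f (c t)) (hc : MDifferentiableAt 𝓘(ℝ, ℝ) I' c t) :
    HasMFDerivAt 𝓘(ℝ, ℝ) I (f ∘ c) t
      ((1 : ℝ →L[ℝ] ℝ).smulRight (mfderiv I' I f (c t) (mfderiv 𝓘(ℝ, ℝ) I' c t (1 : ℝ)))) := by
  have hL : (mfderiv I' I f (c t)).comp (mfderiv 𝓘(ℝ, ℝ) I' c t) =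
      (1 : ℝ →L[ℝ] ℝ).smulRight (mfderiv I' I f (c t) (mfderiv 𝓘(ℝ, ℝ) I' c t (1 : ℝ))) :=
    ContinuousLinearMap.ext_ring (one_smul ℝ _).symm
  exact hL ▸ hf.hasMFDerivAt.comp t hc.hasMFDerivAt

theorem isMIntegralCurve_of_hasMFDerivAt_zero_of_map_add {X : (x : M) → TangentSpace I x}
    {c : ℝ → M} (φ : ℝ → M → M)
    (hX : ∀ t p, X (φ t p) = mfderiv I I (φ t) p (X p))
    (hφ : ∀ t, MDifferentiableAt I I (φ t) (c 0))
    (hc_add : ∀ s t, c (s + t) = φ s (c t))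
    (hc : HasMFDerivAt 𝓘(ℝ, ℝ) I c 0 ((1 : ℝ →L[ℝ] ℝ).smulRight (X (c 0)))) :
    IsMIntegralCurve c X := by
  intro t
  have hc_shift : c = φ t ∘ fun τ => c (τ - t) := by
    funext τ
    rw [Function.comp_apply, ← hc_add, add_sub_cancel]
  have hc_t : c t = φ t (c 0) := by rw [← hc_add, add_zero]
  have hshifted : HasMFDerivAt 𝓘(ℝ, ℝ) I (fun τ => c (τ - t)) t
      ((1 : ℝ →L[ℝ] ℝ).smulRight (X (c 0))) :=
    HasMFDerivAt.comp_sub_const (by rwa [sub_self])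
  have hL : (mfderiv I I (φ t) (c 0)).comp ((1 : ℝ →L[ℝ] ℝ).smulRight (X (c 0))) =
      (1 : ℝ →L[ℝ] ℝ).smulRight (X (c t)) :=
    ContinuousLinearMap.ext_ring <| by
      show mfderiv I I (φ t) (c 0) ((1 : ℝ) • X (c 0)) = (1 : ℝ) • X (c t)
      rw [one_smul, one_smul, hc_t, hX]
  have hφ_t : HasMFDerivAt I I (φ t) (c (t - t)) (mfderiv I I (φ t) (c 0)) := by
    rw [sub_self]
    exact (hφ t).hasMFDerivAt
  have h := hφ_t.comp t hshifted
  rw [← hc_shift] at h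
  exact hL ▸ h

end Curves

theorem integral_curve_of_relative_equilibrium_general
    {EG : Type*} [NormedAddCommGroup EG] [NormedSpace ℝ EG]
    {HG : Type*} [TopologicalSpace HG] {IG : ModelWithCorners ℝ EG HG}
    {G : Type*} [TopologicalSpace G] [ChartedSpace HG G] [Group G]
    {EM : Type*} [NormedAddCommGroup EM] [NormedSpace ℝ EM]
    {HM : Type*} [TopologicalSpace HM] {IM : ModelWithCorners ℝ EM HM}
    {M : Type*} [TopologicalSpace M] [ChartedSpace HM M]
    [MulAction G M]
    (hact : ContMDiff (IG.prod IM) IM (⊤ : ℕ∞) fun p : G × M => p.1 • p.2)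
    (X : (x : M) → TangentSpace IM x)
    (hX_equiv : ∀ (g : G) (p : M), X (g • p) = mfderiv IM IM (fun q : M => g • q) p (X p))
    (m : M) (ξ : TangentSpace IG (1 : G))
    (hrel : X m = mfderiv IG IM (fun g : G => g • m) (1 : G) ξ)
    (γ : ℝ → G)
    (hγ_smooth : ContMDiff 𝓘(ℝ, ℝ) IG (⊤ : ℕ∞) γ)
    (hγ_one : γ 0 = 1)
    (hγ_hom : ∀ s t : ℝ, γ (s + t) = γ s * γ t)
    (hγ_deriv : mfderiv 𝓘(ℝ, ℝ) IG γ 0 (1 : ℝ) = ξ) :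
    IsMIntegralCurve (fun τ : ℝ => γ τ • m) X := by
  have hsmul_left (g : G) : ContMDiff IM IM (⊤ : ℕ∞) fun p : M => g • p :=
    hact.comp (contMDiff_const.prodMk contMDiff_id)
  have horbit : ContMDiff IG IM (⊤ : ℕ∞) fun g : G => g • m :=
    hact.comp (contMDiff_id.prodMk contMDiff_const)
  refine isMIntegralCurve_of_hasMFDerivAt_zero_of_map_add (fun t p => γ t • p)
    (fun t => hX_equiv (γ t)) (fun t => (hsmul_left (γ t)).mdifferentiableAt (by simp))
    (fun s t => by simp only [hγ_hom, mul_smul]) ?_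
  have h := (horbit.mdifferentiableAt (x := γ 0) (by simp)).hasMFDerivAt_comp_curve
    ((hγ_smooth 0).mdifferentiableAt (by simp))
  rw [hγ_deriv, hγ_one] at h
  rw [hγ_one, one_smul, hrel]
  exact h

/-- Let `G` be a Lie group acting smoothly on a smooth manifold `M`, let `X`
be a `G`-equivariant vector field on `M`, let `m` be a relative equilibrium of `X` with velocity
`ξ ∈ 𝔤` (i.e. `X m = T ev_m ξ`), and let `γ : ℝ → G` be a smooth group homomorphism whose
differential at `0` sends `1 ∈ T₀ℝ ≅ ℝ` to `ξ` (so `γ` plays the role of `τ ↦ exp (τ ξ)`).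
Then `τ ↦ γ τ • m` is the integral curve of `X` starting at `m`. -/
theorem integral_curve_of_relative_equilibrium
    {EG : Type*} [NormedAddCommGroup EG] [NormedSpace ℝ EG]
    {HG : Type*} [TopologicalSpace HG] {IG : ModelWithCorners ℝ EG HG}
    {G : Type*} [TopologicalSpace G] [ChartedSpace HG G] [Group G]
    [IsManifold IG (⊤ : ℕ∞) G] [LieGroup IG (⊤ : ℕ∞) G]
    {EM : Type*} [NormedAddCommGroup EM] [NormedSpace ℝ EM]
    {HM : Type*} [TopologicalSpace HM] {IM : ModelWithCorners ℝ EM HM}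
    {M : Type*} [TopologicalSpace M] [ChartedSpace HM M] [IsManifold IM (⊤ : ℕ∞) M]
    [MulAction G M]
    (hact : ContMDiff (IG.prod IM) IM (⊤ : ℕ∞) fun p : G × M => p.1 • p.2)
    (X : (x : M) → TangentSpace IM x)
    (hX_equiv : ∀ (g : G) (p : M), X (g • p) = mfderiv IM IM (fun q : M => g • q) p (X p))
    (m : M) (ξ : TangentSpace IG (1 : G))
    (hrel : X m = mfderiv IG IM (fun g : G => g • m) (1 : G) ξ)
    (γ : ℝ → G)
    (hγ_smooth : ContMDiff 𝓘(ℝ, ℝ) IG (⊤ : ℕ∞) γ)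
    (hγ_one : γ 0 = 1)
    (hγ_hom : ∀ s t : ℝ, γ (s + t) = γ s * γ t)
    (hγ_deriv : mfderiv 𝓘(ℝ, ℝ) IG γ 0 (1 : ℝ) = ξ) :
    IsMIntegralCurve (fun τ : ℝ => γ τ • m) X :=
  integral_curve_of_relative_equilibrium_general hact X hX_equiv m ξ hrel γ hγ_smooth hγ_one hγ_hom
    hγ_deriv
end

section
/- Let K be a compact Lie group with Lie algebra 𝔨 := T₁K acting smoothly and linearly on a finite-dimensional real vector space V, let w₀ ∈ V be nonzero and W := ℝ·w₀. Let X : V × ℝ → V be a smooth path of K-equivariant vector fields and let ψ : V × ℝ → 𝔨 be a smooth path of infinitesimal gauge transformations (ψ(k·v, λ) = Ad(k)(ψ(v, λ)) for all k, v, λ). Define Y(v, λ) := X(v, λ) − T ev_v(ψ(v, λ)). Assume: (1) X(0, λ) = 0 for all λ; (2) there exists ε > 0 such that Y(s·w₀, λ) ∈ W whenever |s| < ε and |λ| < ε; (3) writing Y(s·w₀, λ) = y(s, λ)·w₀ and σ(λ) := ∂y/∂s(0, λ), one has σ(0) = 0 and σ'(0) ≠ 0. Then there exist δ > 0 and a smooth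 λ̂ : (−δ, δ) → ℝ with λ̂(0) = 0 such that for every |s| < δ one has X(s·w₀, λ̂(s)) = T ev_{s·w₀}(ψ(s·w₀, λ̂(s))); that is, s·w₀ is a relative equilibrium of the vector field X(·, λ̂(s)) with velocity ψ(s·w₀, λ̂(s)). -/
open scoped Manifold

open scoped ENNReal NNReal Topology

noncomputable section

/-- The linear map `(s, y) ↦ (0, y)`. -/
def projL : (ℝ × ℝ) →L[ℝ] (ℝ × ℝ) :=
  (0 : (ℝ × ℝ) →L[ℝ] ℝ).prod (ContinuousLinearMap.snd ℝ ℝ ℝ)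

@[simp] lemma projL_apply (x : ℝ × ℝ) : projL x = (0, x.2) := rfl

/-- Auxiliary permutation of `Fin (n+1)` sending `i` to `0` and `i.succAbove k` to `k.succ`. -/
def hadσ {n : ℕ} (i : Fin (n + 1)) : Fin (n + 1) ≃ Fin (n + 1) :=
  (finSuccEquiv' i).trans (finSuccEquiv' 0).symm

@[simp] lemma hadσ_same {n : ℕ} (i : Fin (n + 1)) : hadσ i i = 0 := by
  simp [hadσ, finSuccEquiv'_at]

@[simp] lemma hadσ_succAbove {n : ℕ} (i : Fin (n + 1)) (k : Fin n) :
    hadσ i (i.succAbove k) = k.succ := by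
  simp [hadσ, finSuccEquiv'_succAbove, Fin.zero_succAbove]

end

/-- The invertible linear map `(s, y) ↦ (s, b s + c y)` for `c ≠ 0`. -/
noncomputable def bcEquivLin (b c : ℝ) (hc : c ≠ 0) : (ℝ × ℝ) ≃ₗ[ℝ] (ℝ × ℝ) where
  toFun x := (x.1, b * x.1 + c * x.2)
  invFun x := (x.1, (x.2 - b * x.1) / c)
  map_add' x y := by ext <;> simp <;> ring
  map_smul' a x := by ext <;> simp <;> ring
  left_inv x := by ext <;> field_simp <;> ring
  right_inv x := by ext <;> field_simp <;> ring

/-- Continuous linear equivalence version of `bcEquivLin`. -/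
noncomputable def bcEquiv (b c : ℝ) (hc : c ≠ 0) : (ℝ × ℝ) ≃L[ℝ] (ℝ × ℝ) :=
  (bcEquivLin b c hc).toContinuousLinearEquiv

lemma prodD_eq (D : (ℝ × ℝ) →L[ℝ] ℝ) (hc : D (0, 1) ≠ 0) :
    (ContinuousLinearMap.fst ℝ ℝ ℝ).prod D
      = ((bcEquiv (D (1, 0)) (D (0, 1)) hc : (ℝ × ℝ) ≃L[ℝ] (ℝ × ℝ)) :
          (ℝ × ℝ) →L[ℝ] (ℝ × ℝ)) := by
  apply ContinuousLinearMap.ext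
  intro x
  have hx : (x : ℝ × ℝ) = x.1 • ((1 : ℝ), (0 : ℝ)) + x.2 • ((0 : ℝ), (1 : ℝ)) := by
    ext <;> simp
  have hDx : D x = x.1 * D (1, 0) + x.2 * D (0, 1) := by
    conv_lhs => rw [hx]
    rw [map_add, map_smul, map_smul, smul_eq_mul, smul_eq_mul]
  have : ((bcEquiv (D (1, 0)) (D (0, 1)) hc : (ℝ × ℝ) ≃L[ℝ] (ℝ × ℝ)) :
      (ℝ × ℝ) →L[ℝ] (ℝ × ℝ)) x = (x.1, D (1, 0) * x.1 + D (0, 1) * x.2) := rfl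
  rw [this]
  ext
  · rfl
  · simp only [ContinuousLinearMap.prod_apply, ContinuousLinearMap.coe_fst']
    rw [hDx]; ring


lemma param_int_hasFDerivAt {G : Type} [NormedAddCommGroup G] [NormedSpace ℝ G] [CompleteSpace G]
    (F : (ℝ × ℝ) × ℝ → G) (hF : ContDiff ℝ (⊤ : ℕ∞) F) (x₀ : ℝ × ℝ) :
    HasFDerivAt (fun x => ∫ t in (0:ℝ)..1, F (x, t))
      (∫ t in (0:ℝ)..1, (fderiv ℝ F (x₀, t)).comp (ContinuousLinearMap.inl ℝ (ℝ × ℝ) ℝ)) x₀ := by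
  have hd : Differentiable ℝ F := (contDiff_infty_iff_fderiv.mp hF).1
  have hF'c : Continuous (fun p : (ℝ × ℝ) × ℝ =>
      (fderiv ℝ F p).comp (ContinuousLinearMap.inl ℝ (ℝ × ℝ) ℝ)) :=
    ((contDiff_infty_iff_fderiv.mp hF).2.continuous).clm_comp continuous_const
  obtain ⟨C, hC⟩ := ((isCompact_closedBall x₀ 1).prod
    (isCompact_Icc : IsCompact (Set.Icc (0:ℝ) 1))).exists_bound_of_continuousOn hF'c.continuousOn
  have hFc : Continuous F := hF.continuous
  refine intervalIntegral.hasFDerivAt_integral_of_dominated_of_fderiv_le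
    (F := fun x t => F (x, t))
    (F' := fun x t => (fderiv ℝ F (x, t)).comp (ContinuousLinearMap.inl ℝ (ℝ × ℝ) ℝ))
    (bound := fun _ => C) (Metric.closedBall_mem_nhds x₀ one_pos) ?_ ?_ ?_ ?_ ?_ ?_
  · exact Filter.Eventually.of_forall fun x =>
      (hFc.comp (continuous_const.prodMk continuous_id)).aestronglyMeasurable
  · exact (hFc.comp (continuous_const.prodMk continuous_id)).intervalIntegrable 0 1
  · exact (hF'c.comp (continuous_const.prodMk continuous_id)).aestronglyMeasurable
  · refine Filter.Eventually.of_forall fun t ht x hx => hC (x, t) (Set.mem_prod.mpr ⟨hx, ?_⟩)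
    have ht' : t ∈ Set.Ioc (0:ℝ) 1 := by rwa [Set.uIoc_of_le zero_le_one] at ht
    exact ⟨ht'.1.le, ht'.2⟩
  · exact continuous_const.intervalIntegrable 0 1
  · exact Filter.Eventually.of_forall fun t _ x _ =>
      (hd (x, t)).hasFDerivAt.comp x (hasFDerivAt_prodMk_left x t)

lemma param_int_contDiff_nat : ∀ (n : ℕ) {G : Type} [NormedAddCommGroup G] [NormedSpace ℝ G]
    [CompleteSpace G] (F : (ℝ × ℝ) × ℝ → G), ContDiff ℝ (⊤ : ℕ∞) F →
    ContDiff ℝ n (fun x => ∫ t in (0:ℝ)..1, F (x, t)) := by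
  intro n
  induction n with
  | zero =>
    intro G _ _ _ F hF
    rw [Nat.cast_zero, contDiff_zero]
    exact continuous_iff_continuousAt.2 fun x => (param_int_hasFDerivAt F hF x).continuousAt
  | succ n ih =>
    intro G _ _ _ F hF
    have hF' : ContDiff ℝ (⊤ : ℕ∞) (fun p : (ℝ × ℝ) × ℝ =>
        (fderiv ℝ F p).comp (ContinuousLinearMap.inl ℝ (ℝ × ℝ) ℝ)) :=
      (contDiff_infty_iff_fderiv.mp hF).2.clm_comp contDiff_const
    have hfd : fderiv ℝ (fun x => ∫ t in (0:ℝ)..1, F (x, t))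
        = fun x => ∫ t in (0:ℝ)..1, (fderiv ℝ F (x, t)).comp
            (ContinuousLinearMap.inl ℝ (ℝ × ℝ) ℝ) :=
      funext fun x => (param_int_hasFDerivAt F hF x).fderiv
    rw [Nat.cast_succ, contDiff_succ_iff_fderiv]
    refine ⟨fun x => (param_int_hasFDerivAt F hF x).differentiableAt, fun h => by simp at h, ?_⟩
    rw [hfd]
    exact ih _ hF'

lemma hadamard_div_smooth (g : ℝ × ℝ → ℝ) (hg : ContDiff ℝ (⊤ : ℕ∞) g)
    (h0 : ∀ lam : ℝ, g (0, lam) = 0) :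
    ∃ (h : ℝ × ℝ → ℝ) (R : ℝ), 0 < R ∧
      (∀ q ∈ Metric.ball (0 : ℝ × ℝ) R, ContDiffAt ℝ (⊤ : ℕ∞) h q) ∧
        ∀ q ∈ Metric.ball (0 : ℝ × ℝ) R, g q = q.1 * h q := by
  have hG : ContDiff ℝ (⊤ : ℕ∞) (fun p : ℝ × ℝ => fderiv ℝ g p ((1:ℝ), (0:ℝ))) :=
    (contDiff_infty_iff_fderiv.mp hg).2.clm_apply contDiff_const
  refine ⟨fun q => ∫ t in (0:ℝ)..1, fderiv ℝ g (t * q.1, q.2) ((1:ℝ), (0:ℝ)), 1, one_pos, ?_, ?_⟩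
  · intro q _
    have hF : ContDiff ℝ (⊤ : ℕ∞) (fun p : (ℝ × ℝ) × ℝ =>
        fderiv ℝ g (p.2 * p.1.1, p.1.2) ((1:ℝ), (0:ℝ))) :=
      hG.comp (by fun_prop)
    exact (contDiff_infty.mpr fun n => param_int_contDiff_nat n _ hF).contDiffAt
  · rintro ⟨a, b⟩ _
    have hdg : Differentiable ℝ g := (contDiff_infty_iff_fderiv.mp hg).1
    have hd : ∀ t ∈ Set.uIcc (0:ℝ) 1, HasDerivAt (fun t : ℝ => g (t * a, b))
        (fderiv ℝ g (t * a, b) (a, 0)) t := by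
      intro t _
      have hc : HasDerivAt (fun t : ℝ => ((t * a, b) : ℝ × ℝ)) ((a, 0) : ℝ × ℝ) t := by
        have := ((hasDerivAt_id t).mul_const a).prodMk (hasDerivAt_const t b)
        simpa using this
      exact (hdg _).hasFDerivAt.comp_hasDerivAt t hc
    have hint : IntervalIntegrable (fun t : ℝ => fderiv ℝ g (t * a, b) (a, 0))
        MeasureTheory.volume 0 1 := by
      apply Continuous.intervalIntegrable
      exact (((contDiff_infty_iff_fderiv.mp hg).2.continuous).comp
        (by fun_prop : Continuous fun t : ℝ => ((t * a, b) : ℝ × ℝ))).clm_apply continuous_const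
    have := intervalIntegral.integral_eq_sub_of_hasDerivAt hd hint
    simp only [one_mul, zero_mul, h0, sub_zero] at this
    rw [← this, ← intervalIntegral.integral_const_mul]
    refine intervalIntegral.integral_congr fun t _ => ?_
    have e : ((a, 0) : ℝ × ℝ) = a • ((1:ℝ), (0:ℝ)) := by ext <;> simp
    simp only [e, map_smul, smul_eq_mul]


/-- (Test for bifurcation to relative equilibria on a representation.)
Let `K` be a compact Lie group with Lie algebra `𝔨 = T₁K` acting smoothly and linearly on a
finite-dimensional real vector space `V`, let `w₀ ≠ 0` span the line `W = ℝ • w₀`, let `X` be a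
smooth path of `K`-equivariant vector fields on `V` and `ψ` a smooth path of infinitesimal gauge
transformations (`ψ (k • v) λ = Ad(k) (ψ v λ)`), and set `Y v λ := X v λ − T ev_v (ψ v λ)`.
Assume: (1) `X 0 λ = 0` for all `λ`; (2) for some `ε > 0`, `Y (s • w₀) λ = y s λ • w₀ ∈ W`
whenever `|s| < ε`, `|λ| < ε`; (3) `σ λ := ∂y/∂s (0, λ)` satisfies `σ 0 = 0`, `σ' 0 ≠ 0`.
Then there exist `δ > 0` and a smooth `λ̂ : (−δ, δ) → ℝ` with `λ̂ 0 = 0` such that for `|s| < δ`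
the point `s • w₀` is a relative equilibrium of `X (·, λ̂ s)` with velocity
`ψ (s • w₀) (λ̂ s)`, i.e. `X (s • w₀) (λ̂ s) = T ev_{s • w₀} (ψ (s • w₀) (λ̂ s))`. -/
theorem bifurcation_to_relative_equilibria_on_representation
    {EK : Type*} [NormedAddCommGroup EK] [NormedSpace ℝ EK]
    {HK : Type*} [TopologicalSpace HK] {IK : ModelWithCorners ℝ EK HK}
    {K : Type*} [TopologicalSpace K] [ChartedSpace HK K] [Group K]
    [IsManifold IK (⊤ : ℕ∞) K] [LieGroup IK (⊤ : ℕ∞) K] [CompactSpace K]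
    {V : Type*} [NormedAddCommGroup V] [NormedSpace ℝ V] [FiniteDimensional ℝ V]
    [MulAction K V]
    (hlin : ∀ k : K, IsLinearMap ℝ fun v : V => k • v)
    (hact : ContMDiff (IK.prod 𝓘(ℝ, V)) 𝓘(ℝ, V) (⊤ : ℕ∞) fun p : K × V => p.1 • p.2)
    (w₀ : V) (hw₀ : w₀ ≠ 0)
    (X : V → ℝ → V)
    (hX_smooth : ContDiff ℝ (⊤ : ℕ∞) fun p : V × ℝ => X p.1 p.2)
    (hX_equiv : ∀ (k : K) (v : V) (lam : ℝ), X (k • v) lam = k • X v lam)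
    (ψ : V → ℝ → EK)
    (hψ_smooth : ContDiff ℝ (⊤ : ℕ∞) fun p : V × ℝ => ψ p.1 p.2)
    (hψ_equiv : ∀ (k : K) (v : V) (lam : ℝ),
      ψ (k • v) lam = mfderiv IK IK (fun h : K => k * h * k⁻¹) (1 : K) (ψ v lam))
    (Y : V → ℝ → V)
    (hY_def : ∀ (v : V) (lam : ℝ),
      Y v lam =
        X v lam - (show V from mfderiv IK 𝓘(ℝ, V) (fun k : K => k • v) (1 : K) (ψ v lam)))
    (hX_zero : ∀ lam : ℝ, X 0 lam = 0)
    (ε : ℝ) (hε : 0 < ε)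
    (y : ℝ → ℝ → ℝ)
    (htangent : ∀ s lam : ℝ, |s| < ε → |lam| < ε → Y (s • w₀) lam = y s lam • w₀)
    (hσ_zero : deriv (fun s : ℝ => y s 0) 0 = 0)
    (hσ'_ne : deriv (fun lam : ℝ => deriv (fun s : ℝ => y s lam) 0) 0 ≠ 0) :
    ∃ δ > (0 : ℝ), ∃ lamhat : ℝ → ℝ,
      ContDiffOn ℝ (⊤ : ℕ∞) lamhat (Set.Ioo (-δ) δ) ∧ lamhat 0 = 0 ∧
      ∀ s : ℝ, |s| < δ →
        X (s • w₀) (lamhat s) =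
          mfderiv IK 𝓘(ℝ, V) (fun k : K => k • s • w₀) (1 : K) (ψ (s • w₀) (lamhat s)) := by
  classical
  -- a dual functional with `φ w₀ = 1`
  obtain ⟨φ₀, hφ₀norm, hφ₀⟩ := exists_dual_vector ℝ w₀ (norm_ne_zero_iff.mpr hw₀)
  set φ : V →L[ℝ] ℝ := ‖w₀‖⁻¹ • φ₀ with hφdef
  have hφw : φ w₀ = 1 := by
    rw [hφdef]
    simp only [ContinuousLinearMap.smul_apply, hφ₀, smul_eq_mul]
    exact inv_mul_cancel₀ (norm_ne_zero_iff.mpr hw₀)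
  -- the evaluation maps and their differentials
  have hev : ∀ v : V, ContMDiff IK 𝓘(ℝ, V) (⊤ : ℕ∞) (fun k : K => k • v) := fun v =>
    hact.comp (contMDiff_id.prodMk contMDiff_const)
  have hevd : ∀ v : V, MDifferentiableAt IK 𝓘(ℝ, V) (fun k : K => k • v) 1 := fun v =>
    (hev v).mdifferentiableAt (by simp)
  set B : EK →L[ℝ] V := mfderiv IK 𝓘(ℝ, V) (fun k : K => k • w₀) (1 : K) with hB
  -- scaling property of the differential of the evaluation map
  have hscale : ∀ (s : ℝ) (ξ : EK),
      (show V from mfderiv IK 𝓘(ℝ, V) (fun k : K => k • s • w₀) (1 : K) ξ) = s • (B ξ) := by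
    intro s ξ
    set L : V →L[ℝ] V := s • ContinuousLinearMap.id ℝ V with hL
    have hfun : (fun k : K => k • s • w₀) = (⇑L) ∘ (fun k : K => k • w₀) := by
      funext k
      simp only [Function.comp_apply, hL, ContinuousLinearMap.smul_apply,
        ContinuousLinearMap.id_apply]
      exact (hlin k).map_smul s w₀
    rw [hfun, mfderiv_comp (1 : K) L.hasMFDerivAt.mdifferentiableAt (hevd w₀),
      L.hasMFDerivAt.mfderiv]
    rfl
  -- the reduced bifurcation function
  set g : ℝ × ℝ → ℝ := fun q => φ (X (q.1 • w₀) q.2) - q.1 * φ (B (ψ (q.1 • w₀) q.2)) with hgdef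
  have hgY : ∀ s lam : ℝ, φ (Y (s • w₀) lam) = g (s, lam) := by
    intro s lam
    rw [hY_def, map_sub, hscale s (ψ (s • w₀) lam), map_smul, smul_eq_mul]
  have hg0 : ∀ lam : ℝ, g (0, lam) = 0 := by
    intro lam
    simp only [hgdef, zero_smul, hX_zero lam, map_zero, zero_mul, sub_zero]
  have hgsm : ContDiff ℝ (⊤ : ℕ∞) g := by
    have h1 : ContDiff ℝ (⊤ : ℕ∞) (fun q : ℝ × ℝ => (q.1 • w₀, q.2)) :=
      (contDiff_fst.smul contDiff_const).prodMk contDiff_snd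
    have hXc : ContDiff ℝ (⊤ : ℕ∞) (fun q : ℝ × ℝ => X (q.1 • w₀) q.2) := hX_smooth.comp h1
    have hψc : ContDiff ℝ (⊤ : ℕ∞) (fun q : ℝ × ℝ => ψ (q.1 • w₀) q.2) := hψ_smooth.comp h1
    exact (φ.contDiff.comp hXc).sub
      (contDiff_fst.mul (φ.contDiff.comp (B.contDiff.comp hψc)))
  -- Hadamard division
  obtain ⟨h, R₀, hR₀pos, hha₀, hgh₀⟩ := hadamard_div_smooth g hgsm hg0
  set R : ℝ := min R₀ ε with hRdef
  have hRpos : 0 < R := lt_min hR₀pos hε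
  have hRle : R ≤ R₀ := min_le_left _ _
  have hRε : R ≤ ε := min_le_right _ _
  have hha : ∀ q ∈ Metric.ball (0 : ℝ × ℝ) R, ContDiffAt ℝ (⊤ : ℕ∞) h q := fun q hq =>
    hha₀ q (Metric.ball_subset_ball hRle hq)
  have hgh : ∀ q ∈ Metric.ball (0 : ℝ × ℝ) R, g q = q.1 * h q := fun q hq =>
    hgh₀ q (Metric.ball_subset_ball hRle hq)
  have hmemR : ∀ a b : ℝ, |a| < R → |b| < R → ((a, b) : ℝ × ℝ) ∈ Metric.ball (0 : ℝ × ℝ) R := by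
    intro a b ha hb
    rw [Metric.mem_ball, dist_zero_right, Prod.norm_def]
    exact max_lt (by simpa [Real.norm_eq_abs] using ha) (by simpa [Real.norm_eq_abs] using hb)
  -- value of h on the axis
  have hh0 : ∀ lam : ℝ, |lam| < R → h (0, lam) = deriv (fun s : ℝ => g (s, lam)) 0 := by
    intro lam hlam
    have hmem : ((0 : ℝ), lam) ∈ Metric.ball (0 : ℝ × ℝ) R := hmemR 0 lam (by simpa using hRpos) hlam
    have hdiff : DifferentiableAt ℝ (fun s : ℝ => h (s, lam)) 0 := by
      have := (hha _ hmem).differentiableAt (by simp)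
      exact this.comp 0 (differentiableAt_id.prodMk (differentiableAt_const lam))
    have hder : HasDerivAt (fun s : ℝ => s * h (s, lam)) (h (0, lam)) 0 := by
      have := (hasDerivAt_id (0 : ℝ)).mul hdiff.hasDerivAt
      simpa [Pi.mul_def] using this
    have hev' : (fun s : ℝ => g (s, lam)) =ᶠ[nhds (0 : ℝ)] fun s => s * h (s, lam) := by
      filter_upwards [Metric.ball_mem_nhds (0 : ℝ) hRpos] with s hs
      have : |s| < R := by simpa [Real.dist_eq] using hs
      exact hgh (s, lam) (hmemR s lam this hlam)
    rw [hev'.deriv_eq, hder.deriv]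
  -- relation with y's partial derivative
  have hgy : ∀ lam : ℝ, |lam| < R →
      deriv (fun s : ℝ => g (s, lam)) 0 = deriv (fun s : ℝ => y s lam) 0 := by
    intro lam hlam
    have hlamε : |lam| < ε := lt_of_lt_of_le hlam hRε
    have : (fun s : ℝ => g (s, lam)) =ᶠ[nhds (0 : ℝ)] fun s => y s lam := by
      filter_upwards [Metric.ball_mem_nhds (0 : ℝ) hε] with s hs
      have hsε : |s| < ε := by simpa [Real.dist_eq] using hs
      rw [← hgY s lam, htangent s lam hsε hlamε, map_smul, smul_eq_mul, hφw, mul_one]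
    exact this.deriv_eq
  have hh00 : h (0, 0) = 0 := by
    rw [hh0 0 (by simpa using hRpos), hgy 0 (by simpa using hRpos), hσ_zero]
  have hhσ' : deriv (fun lam : ℝ => h (0, lam)) 0 ≠ 0 := by
    have heq : (fun lam : ℝ => h (0, lam))
        =ᶠ[nhds (0 : ℝ)] fun lam => deriv (fun s : ℝ => y s lam) 0 := by
      filter_upwards [Metric.ball_mem_nhds (0 : ℝ) hRpos] with lam hlam
      have : |lam| < R := by simpa [Real.dist_eq] using hlam
      rw [hh0 lam this, hgy lam this]
    rw [heq.deriv_eq]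
    exact hσ'_ne
  -- the map to invert
  set Φ : ℝ × ℝ → ℝ × ℝ := fun q => (q.1, h q) with hΦdef
  have hΦan : ∀ q ∈ Metric.ball (0 : ℝ × ℝ) R, ContDiffAt ℝ (⊤ : ℕ∞) Φ q := fun q hq =>
    contDiff_fst.contDiffAt.prodMk (hha q hq)
  have hΦd : ∀ q, DifferentiableAt ℝ h q → HasFDerivAt Φ
      ((ContinuousLinearMap.fst ℝ ℝ ℝ).prod (fderiv ℝ h q)) q := fun q hq =>
    hasFDerivAt_fst.prodMk hq.hasFDerivAt
  have h00ball : ((0, 0) : ℝ × ℝ) ∈ Metric.ball (0 : ℝ × ℝ) R := hmemR 0 0 (by simpa using hRpos) (by simpa using hRpos)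
  -- the λ-partial derivative of h is the relevant quantity
  have hpart : ∀ q ∈ Metric.ball (0 : ℝ × ℝ) R,
      HasDerivAt (fun lam : ℝ => h (q.1, lam)) (fderiv ℝ h q (0, 1)) q.2 := by
    intro q hq
    have hh' : HasFDerivAt h (fderiv ℝ h q) q := ((hha q hq).differentiableAt (by simp)).hasFDerivAt
    have hcurve : HasDerivAt (fun lam : ℝ => ((q.1 : ℝ), lam)) (((0 : ℝ), (1 : ℝ))) q.2 :=
      (hasDerivAt_const q.2 q.1).prodMk (hasDerivAt_id q.2)
    have := hh'.comp_hasDerivAt q.2 hcurve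
    simpa [Function.comp_def] using this
  have hc00 : fderiv ℝ h ((0, 0) : ℝ × ℝ) (0, 1) ≠ 0 := by
    have h' : HasDerivAt (fun lam : ℝ => h (0, lam)) (fderiv ℝ h ((0, 0) : ℝ × ℝ) (0, 1)) 0 := by
      simpa using hpart (0, 0) h00ball
    rw [← h'.deriv]
    exact hhσ'
  -- local homeomorphism at the origin
  have hΦ00 : Φ ((0, 0) : ℝ × ℝ) = ((0, 0) : ℝ × ℝ) := by
    simp only [hΦdef, Prod.mk.injEq]
    exact ⟨trivial, hh00⟩
  have hΦd0 : HasFDerivAt Φ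
      ((bcEquiv (fderiv ℝ h ((0, 0) : ℝ × ℝ) (1, 0)) (fderiv ℝ h ((0, 0) : ℝ × ℝ) (0, 1)) hc00 :
        (ℝ × ℝ) ≃L[ℝ] (ℝ × ℝ)) : (ℝ × ℝ) →L[ℝ] (ℝ × ℝ)) ((0, 0) : ℝ × ℝ) := by
    rw [← prodD_eq _ hc00]
    exact hΦd _ ((hha _ h00ball).differentiableAt (by simp))
  set f := (hΦan _ h00ball).toOpenPartialHomeomorph Φ hΦd0 (by simp) with hfdef
  have hfcoe : (f : ℝ × ℝ → ℝ × ℝ) = Φ := rfl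
  have h00src : ((0, 0) : ℝ × ℝ) ∈ f.source :=
    (hΦan _ h00ball).mem_toOpenPartialHomeomorph_source hΦd0 (by simp)
  have h00tgt : ((0, 0) : ℝ × ℝ) ∈ f.target := by
    have := (hΦan _ h00ball).image_mem_toOpenPartialHomeomorph_target hΦd0 (by simp)
    rwa [hΦ00] at this
  have hsymm00 : f.symm ((0, 0) : ℝ × ℝ) = ((0, 0) : ℝ × ℝ) := by
    have h1 := f.left_inv h00src
    rw [hfcoe, hΦ00] at h1
    exact h1
  -- the open set of good points
  have hfdcont : ContinuousOn (fun q => fderiv ℝ h q) (Metric.ball (0 : ℝ × ℝ) R) :=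
    fun q hq => ((hha q hq).fderiv_right (m := 0) (by simp)).continuousAt.continuousWithinAt
  have hccont : ContinuousOn (fun q => fderiv ℝ h q ((0 : ℝ), (1 : ℝ)))
      (Metric.ball (0 : ℝ × ℝ) R) := hfdcont.clm_apply continuousOn_const
  set U : Set (ℝ × ℝ) := Metric.ball (0 : ℝ × ℝ) R ∩
      (fun q => fderiv ℝ h q ((0 : ℝ), (1 : ℝ))) ⁻¹' {x : ℝ | x ≠ 0} with hUdef
  have hUopen : IsOpen U := hccont.isOpen_inter_preimage Metric.isOpen_ball isOpen_ne
  have h00U : ((0, 0) : ℝ × ℝ) ∈ U := ⟨h00ball, hc00⟩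
  set W : Set (ℝ × ℝ) := f.target ∩ f.symm ⁻¹' (f.source ∩ U) with hWdef
  have hWopen : IsOpen W := f.isOpen_inter_preimage_symm (f.open_source.inter hUopen)
  have h00W : ((0, 0) : ℝ × ℝ) ∈ W :=
    ⟨h00tgt, by rw [Set.mem_preimage, hsymm00]; exact ⟨h00src, h00U⟩⟩
  have hWfacts : ∀ a ∈ W, f.symm a ∈ U ∧ Φ (f.symm a) = a := by
    intro a ha
    refine ⟨(Set.mem_preimage.mp ha.2).2, ?_⟩
    have h1 := f.right_inv ha.1
    rwa [hfcoe] at h1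
  -- smoothness of the inverse at points of W
  have hsymm_cd : ∀ a ∈ W, ContDiffAt ℝ (⊤ : ℕ∞) (f.symm) a := by
    intro a ha
    obtain ⟨hU', -⟩ := hWfacts a ha
    have hball' : f.symm a ∈ Metric.ball (0 : ℝ × ℝ) R := hU'.1
    have hcx : fderiv ℝ h (f.symm a) ((0 : ℝ), (1 : ℝ)) ≠ 0 := hU'.2
    refine f.contDiffAt_symm ha.1 (f₀' := bcEquiv (fderiv ℝ h (f.symm a) ((1 : ℝ), (0 : ℝ))) (fderiv ℝ h (f.symm a) ((0 : ℝ), (1 : ℝ))) hcx) ?_ ?_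
    · rw [hfcoe, ← prodD_eq _ hcx]
      exact hΦd _ ((hha _ hball').differentiableAt (by simp))
    · rw [hfcoe]
      exact hΦan _ hball'
  -- the radius
  have hWpre : IsOpen {u : ℝ | ((u, 0) : ℝ × ℝ) ∈ W} :=
    hWopen.preimage (continuous_id.prodMk continuous_const)
  obtain ⟨δ, hδpos, hδ⟩ := Metric.isOpen_iff.mp hWpre 0 h00W
  have hmemW : ∀ s : ℝ, |s| < δ → ((s, 0) : ℝ × ℝ) ∈ W := fun s hs =>
    hδ (by simpa [Real.dist_eq] using hs)
  refine ⟨δ, hδpos, fun u => (f.symm (u, 0)).2, ?_, ?_, ?_⟩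
  · -- smoothness of lamhat
    intro u hu
    have hu' : |u| < δ := abs_lt.mpr ⟨hu.1, hu.2⟩
    have h1 : ContDiffAt ℝ (⊤ : ℕ∞) (fun u : ℝ => ((u, 0) : ℝ × ℝ)) u :=
      (contDiff_id.prodMk contDiff_const).contDiffAt
    have h2 : ContDiffAt ℝ (⊤ : ℕ∞) (f.symm ∘ fun u : ℝ => ((u, 0) : ℝ × ℝ)) u :=
      (hsymm_cd _ (hmemW u hu')).comp u h1
    exact (contDiff_snd.contDiffAt.comp u h2).contDiffWithinAt
  · -- lamhat 0 = 0
    show (f.symm ((0 : ℝ), (0 : ℝ))).2 = 0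
    rw [hsymm00]
  · -- the bifurcation equation
    intro s hs
    have haW : ((s, 0) : ℝ × ℝ) ∈ W := hmemW s hs
    obtain ⟨hxU, hΦx⟩ := hWfacts _ haW
    set x : ℝ × ℝ := f.symm (s, 0) with hxdef
    have hxball : x ∈ Metric.ball (0 : ℝ × ℝ) R := hxU.1
    have hxnorm : ‖x‖ < R := by
      rw [Metric.mem_ball, dist_zero_right] at hxball
      exact hxball
    have hx1 : x.1 = s := congrArg Prod.fst hΦx
    have hx2 : h x = 0 := congrArg Prod.snd hΦx
    have hxeq : ((s, x.2) : ℝ × ℝ) = x := by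
      rw [← hx1]
    have hgx0 : g (s, x.2) = 0 := by
      rw [hxeq, hgh x hxball, hx2, mul_zero]
    have hsε : |s| < ε := by
      rw [← hx1, ← Real.norm_eq_abs]
      exact lt_of_le_of_lt (norm_fst_le x) (lt_of_lt_of_le hxnorm hRε)
    have hlamε : |x.2| < ε := by
      rw [← Real.norm_eq_abs]
      exact lt_of_le_of_lt (norm_snd_le x) (lt_of_lt_of_le hxnorm hRε)
    have hy0 : y s x.2 = 0 := by
      have h1 := hgY s x.2
      rw [htangent s x.2 hsε hlamε, map_smul, smul_eq_mul, hφw, mul_one, hgx0] at h1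
      exact h1
    have hY0 : Y (s • w₀) x.2 = 0 := by
      rw [htangent s x.2 hsε hlamε, hy0, zero_smul]
    have h4 := hY_def (s • w₀) x.2
    rw [hY0] at h4
    exact sub_eq_zero.mp h4.symm
end

section
/- Let ∂_A : A₁ → A₀ and ∂_B : B₁ → B₀ be continuous homomorphisms of topological abelian groups. Suppose given continuous group homomorphisms E₀ : A₀ → B₀, E₁ : A₁ → B₁, P₀ : B₀ → A₀, P₁ : B₁ → A₁ with E₀ ∘ ∂_A = ∂_B ∘ E₁ and P₀ ∘ ∂_B = ∂_A ∘ P₁, together with continuous group homomorphisms η : A₀ → A₁ and h : B₀ → B₁ satisfying ∂_A(η(x)) = x − P₀(E₀(x)) for all x ∈ A₀ and ∂_B(h(y)) = y − E₀(P₀(y)) for all y ∈ B₀. If U ⊆ A₀ is open and dense, then the set { ∂_B(ψ) + E₀(x) : ψ ∈ B₁, x ∈ U } is open and dense in B₀. -/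
/-!
The objects isomorphic to objects of `U` form the set `∂_A A₁ + U`, a union of translates of `U`,
hence open. The set in question is `∂_B B₁ + E₀ U`, and the homotopies show that it is the
preimage of `∂_A A₁ + U` under `P₀`, hence open. Every `y ∈ B₀` is isomorphic to `E₀ (P₀ y)`, so
`∂_B B₁ + E₀ A₀ = B₀`, and density of `U` passes through the continuous map `E₀` to density of
`∂_B B₁ + E₀ U`.
-/

open Set Pointwise

theorem dense_add_image {X G : Type*} [TopologicalSpace X] [TopologicalSpace G] [Add G]
    [ContinuousAdd G] {s : Set G} {f : X → G} (hf : Continuous f) (hsf : s + range f = univ)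
    {U : Set X} (hU : Dense U) : Dense (s + f '' U) := by
  rw [dense_iff_closure_eq, ← univ_subset_iff]
  calc univ = s + f '' closure U := by rw [hU.closure_eq, image_univ, hsf]
    _ ⊆ s + closure (f '' U) := add_subset_add_left (image_closure_subset_closure_image hf)
    _ ⊆ closure (s + f '' U) := set_vadd_closure_subset s (f '' U)

section TwoGroupEquivalence

variable {A₁ A₀ B₁ B₀ : Type*} [AddCommGroup A₁] [AddCommGroup A₀] [AddCommGroup B₁]
  [AddCommGroup B₀] {bdA : A₁ →+ A₀} {bdB : B₁ →+ B₀} {E₀ : A₀ →+ B₀} {P₀ : B₀ →+ A₀}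

theorem range_add_range_eq_univ {h : B₀ →+ B₁} (hh_eq : ∀ y : B₀, bdB (h y) = y - E₀ (P₀ y)) :
    range bdB + range E₀ = univ :=
  eq_univ_of_forall fun y ↦
    mem_add.2 ⟨bdB (h y), mem_range_self _, E₀ (P₀ y), mem_range_self _,
      by rw [hh_eq, sub_add_cancel]⟩

theorem map_mem_range_add_of_mem {P₁ : B₁ →+ A₁} {η : A₀ →+ A₁}
    (hP_comm : ∀ φ : B₁, P₀ (bdB φ) = bdA (P₁ φ))
    (hη_eq : ∀ x : A₀, bdA (η x) = x - P₀ (E₀ x)) {U : Set A₀} {z : B₀}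
    (hz : z ∈ range bdB + E₀ '' U) : P₀ z ∈ range bdA + U := by
  obtain ⟨_, ⟨ψ, rfl⟩, _, ⟨x, hx, rfl⟩, rfl⟩ := hz
  refine mem_add.2 ⟨bdA (P₁ ψ - η x), mem_range_self _, x, hx, ?_⟩
  rw [map_add, hP_comm, map_sub, hη_eq]
  abel

theorem mem_range_add_image_of_map_mem {E₁ : A₁ →+ B₁} {h : B₀ →+ B₁}
    (hE_comm : ∀ ψ : A₁, E₀ (bdA ψ) = bdB (E₁ ψ))
    (hh_eq : ∀ y : B₀, bdB (h y) = y - E₀ (P₀ y)) {U : Set A₀} {z : B₀}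
    (hz : P₀ z ∈ range bdA + U) : z ∈ range bdB + E₀ '' U := by
  obtain ⟨_, ⟨φ, rfl⟩, x, hx, hφx⟩ := hz
  refine mem_add.2 ⟨bdB (h z + E₁ φ), mem_range_self _, E₀ x, mem_image_of_mem _ hx, ?_⟩
  have hE₀P₀ : E₀ (P₀ z) = bdB (E₁ φ) + E₀ x := by rw [← hφx, map_add, hE_comm]
  rw [map_add, hh_eq, hE₀P₀]
  abel

theorem range_add_image_eq_preimage {E₁ : A₁ →+ B₁} {P₁ : B₁ →+ A₁} {η : A₀ →+ A₁}
    {h : B₀ →+ B₁} (hE_comm : ∀ ψ : A₁, E₀ (bdA ψ) = bdB (E₁ ψ))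
    (hP_comm : ∀ φ : B₁, P₀ (bdB φ) = bdA (P₁ φ))
    (hη_eq : ∀ x : A₀, bdA (η x) = x - P₀ (E₀ x))
    (hh_eq : ∀ y : B₀, bdB (h y) = y - E₀ (P₀ y)) (U : Set A₀) :
    range bdB + E₀ '' U = P₀ ⁻¹' (range bdA + U) :=
  Subset.antisymm (fun _ ↦ map_mem_range_add_of_mem hP_comm hη_eq)
    (fun _ ↦ mem_range_add_image_of_map_mem hE_comm hh_eq)

end TwoGroupEquivalence

theorem equivalence_preserves_open_dense_up_to_isomorphism_general
    {A₁ A₀ B₁ B₀ : Type*}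
    [AddCommGroup A₁]
    [AddCommGroup A₀] [TopologicalSpace A₀] [IsTopologicalAddGroup A₀]
    [AddCommGroup B₁]
    [AddCommGroup B₀] [TopologicalSpace B₀] [IsTopologicalAddGroup B₀]
    (bdA : A₁ →+ A₀)
    (bdB : B₁ →+ B₀)
    (E₀ : A₀ →+ B₀) (hE₀ : Continuous E₀)
    (E₁ : A₁ →+ B₁)
    (P₀ : B₀ →+ A₀) (hP₀ : Continuous P₀)
    (P₁ : B₁ →+ A₁)
    (hE_comm : ∀ ψ : A₁, E₀ (bdA ψ) = bdB (E₁ ψ))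
    (hP_comm : ∀ φ : B₁, P₀ (bdB φ) = bdA (P₁ φ))
    (η : A₀ →+ A₁)
    (hη_eq : ∀ x : A₀, bdA (η x) = x - P₀ (E₀ x))
    (h : B₀ →+ B₁)
    (hh_eq : ∀ y : B₀, bdB (h y) = y - E₀ (P₀ y))
    (U : Set A₀) (hU_open : IsOpen U) (hU_dense : Dense U) :
    IsOpen {z : B₀ | ∃ ψ : B₁, ∃ x ∈ U, z = bdB ψ + E₀ x} ∧
      Dense {z : B₀ | ∃ ψ : B₁, ∃ x ∈ U, z = bdB ψ + E₀ x} := by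
  have hS : {z : B₀ | ∃ ψ : B₁, ∃ x ∈ U, z = bdB ψ + E₀ x} = range bdB + E₀ '' U := by
    ext z
    simp [mem_add, eq_comm]
  rw [hS]
  refine ⟨?_, dense_add_image hE₀ (range_add_range_eq_univ hh_eq) hU_dense⟩
  rw [range_add_image_eq_preimage hE_comm hP_comm hη_eq hh_eq]
  exact hU_open.add_left.preimage hP₀

/-- Given continuous homomorphisms `∂_A : A₁ → A₀`, `∂_B : B₁ → B₀` of
topological abelian groups, continuous group homomorphisms `E₀, E₁, P₀, P₁` intertwining the
boundary maps (`E₀ ∘ ∂_A = ∂_B ∘ E₁`, `P₀ ∘ ∂_B = ∂_A ∘ P₁`), and continuous group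
homomorphisms `η : A₀ → A₁`, `h : B₀ → B₁` with `∂_A (η x) = x − P₀ (E₀ x)` and
`∂_B (h y) = y − E₀ (P₀ y)` (an equivalence of topological abelian 2-groups): if `U ⊆ A₀` is
open and dense, then the set `{ ∂_B ψ + E₀ x : ψ ∈ B₁, x ∈ U }` of all objects of `B₀`
isomorphic to objects in `E₀(U)` is open and dense in `B₀`. -/
theorem equivalence_preserves_open_dense_up_to_isomorphism
    {A₁ A₀ B₁ B₀ : Type*}
    [AddCommGroup A₁] [TopologicalSpace A₁] [IsTopologicalAddGroup A₁]
    [AddCommGroup A₀] [TopologicalSpace A₀] [IsTopologicalAddGroup A₀]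
    [AddCommGroup B₁] [TopologicalSpace B₁] [IsTopologicalAddGroup B₁]
    [AddCommGroup B₀] [TopologicalSpace B₀] [IsTopologicalAddGroup B₀]
    (bdA : A₁ →+ A₀) (hbdA : Continuous bdA)
    (bdB : B₁ →+ B₀) (hbdB : Continuous bdB)
    (E₀ : A₀ →+ B₀) (hE₀ : Continuous E₀)
    (E₁ : A₁ →+ B₁) (hE₁ : Continuous E₁)
    (P₀ : B₀ →+ A₀) (hP₀ : Continuous P₀)
    (P₁ : B₁ →+ A₁) (hP₁ : Continuous P₁)
    (hE_comm : ∀ ψ : A₁, E₀ (bdA ψ) = bdB (E₁ ψ))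
    (hP_comm : ∀ φ : B₁, P₀ (bdB φ) = bdA (P₁ φ))
    (η : A₀ →+ A₁) (hη : Continuous η)
    (hη_eq : ∀ x : A₀, bdA (η x) = x - P₀ (E₀ x))
    (h : B₀ →+ B₁) (hh : Continuous h)
    (hh_eq : ∀ y : B₀, bdB (h y) = y - E₀ (P₀ y))
    (U : Set A₀) (hU_open : IsOpen U) (hU_dense : Dense U) :
    IsOpen {z : B₀ | ∃ ψ : B₁, ∃ x ∈ U, z = bdB ψ + E₀ x} ∧
      Dense {z : B₀ | ∃ ψ : B₁, ∃ x ∈ U, z = bdB ψ + E₀ x} :=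
  equivalence_preserves_open_dense_up_to_isomorphism_general bdA bdB E₀ hE₀ E₁ P₀ hP₀ P₁ hE_comm
    hP_comm η hη_eq h hh_eq U hU_open hU_dense
end

section
/- Let G be a Lie group acting smoothly on a smooth boundaryless Hausdorff manifold M, let X be a smooth (C^∞) G-equivariant vector field on M, and let γ : ℝ → M be an integral curve of X. Then the isotropy is constant along γ: for every τ ∈ ℝ, the stabilizer subgroup of γ(τ) in G equals the stabilizer subgroup of γ(0); in particular, every g ∈ G with g·γ(0) = γ(0) satisfies g·γ(τ) = γ(τ) for all τ ∈ ℝ. -/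
/-!
By the chain rule and equivariance of `X`, the translate `g • γ` of an integral curve is again an
integral curve of `X`. If `g` fixes `γ τ`, then `g • γ` and `γ` agree at `τ`, so they agree
everywhere by uniqueness of integral curves of a `C¹` vector field on a boundaryless Hausdorff
manifold.
-/

open scoped Manifold

section IntegralCurveImage

variable {E : Type*} [NormedAddCommGroup E] [NormedSpace ℝ E]
  {H : Type*} [TopologicalSpace H] {I : ModelWithCorners ℝ E H}
  {M : Type*} [TopologicalSpace M] [ChartedSpace H M]
  {E' : Type*} [NormedAddCommGroup E'] [NormedSpace ℝ E']
  {H' : Type*} [TopologicalSpace H'] {I' : ModelWithCorners ℝ E' H'}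
  {M' : Type*} [TopologicalSpace M'] [ChartedSpace H' M']
  {γ : ℝ → M} {v : (x : M) → TangentSpace I x}

lemma IsMIntegralCurve.comp_of_mfderiv_apply_eq {f : M → M'}
    {w : (y : M') → TangentSpace I' y} (hγ : IsMIntegralCurve γ v) (hf : MDifferentiable I I' f)
    (hfvw : ∀ x, mfderiv I I' f x (v x) = w (f x)) :
    IsMIntegralCurve (f ∘ γ) w := by
  intro t
  refine ((hf (γ t)).hasMFDerivAt.comp t (hγ t)).congr_mfderiv ?_
  change _ = (1 : ℝ →L[ℝ] ℝ).smulRight (w (f (γ t)))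
  rw [← hfvw]
  ext
  exact map_smul (mfderiv I I' f (γ t)) _ _

lemma IsMIntegralCurve.comp_eq_of_apply_eq [IsManifold I 1 M] [T2Space M]
    [BoundarylessManifold I M] {f : M → M} {t₀ : ℝ}
    (hv : ContMDiff I I.tangent 1 fun x : M => (⟨x, v x⟩ : TangentBundle I M))
    (hγ : IsMIntegralCurve γ v) (hf : MDifferentiable I I f)
    (hfv : ∀ x, mfderiv I I f x (v x) = v (f x)) (hfix : f (γ t₀) = γ t₀) :
    f ∘ γ = γ :=
  isMIntegralCurve_Ioo_eq_of_contMDiff_boundaryless hv (hγ.comp_of_mfderiv_apply_eq hf hfv) hγ hfix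

end IntegralCurveImage

theorem stabilizer_constant_along_integral_curve_general
    {EG : Type*} [NormedAddCommGroup EG] [NormedSpace ℝ EG]
    {HG : Type*} [TopologicalSpace HG] {IG : ModelWithCorners ℝ EG HG}
    {G : Type*} [TopologicalSpace G] [ChartedSpace HG G] [Group G]
    {EM : Type*} [NormedAddCommGroup EM] [NormedSpace ℝ EM]
    {HM : Type*} [TopologicalSpace HM] {IM : ModelWithCorners ℝ EM HM}
    {M : Type*} [TopologicalSpace M] [ChartedSpace HM M] [IsManifold IM (⊤ : ℕ∞) M]
    [T2Space M] [BoundarylessManifold IM M]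
    [MulAction G M]
    (hact : ContMDiff (IG.prod IM) IM (⊤ : ℕ∞) fun p : G × M => p.1 • p.2)
    (X : (x : M) → TangentSpace IM x)
    (hX_smooth : ContMDiff IM IM.tangent (⊤ : ℕ∞)
      fun x : M => (⟨x, X x⟩ : TangentBundle IM M))
    (hX_equiv : ∀ (g : G) (p : M), X (g • p) = mfderiv IM IM (fun q : M => g • q) p (X p))
    (γ : ℝ → M) (hγ : IsMIntegralCurve γ X) :
    ∀ τ : ℝ, MulAction.stabilizer G (γ τ) = MulAction.stabilizer G (γ 0) := by
  have hX : ContMDiff IM IM.tangent 1 fun x : M => (⟨x, X x⟩ : TangentBundle IM M) :=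
    hX_smooth.of_le (by simp)
  have hsmul (g : G) : MDifferentiable IM IM fun q : M => g • q :=
    (hact.comp (contMDiff_const.prodMk contMDiff_id)).mdifferentiable (by simp)
  have fixes (g : G) (s t : ℝ) (hs : g • γ s = γ s) : g • γ t = γ t :=
    congrFun (hγ.comp_eq_of_apply_eq hX (hsmul g) (fun p => (hX_equiv g p).symm) hs) t
  intro τ
  ext g
  exact ⟨fixes g τ 0, fixes g 0 τ⟩

/-- Let `G` be a Lie group acting smoothly on a smooth boundaryless Hausdorff
manifold `M`, let `X` be a smooth `G`-equivariant vector field on `M`, and let `γ : ℝ → M` be an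
integral curve of `X`.  Then the isotropy is constant along `γ`: for every `τ`, the stabilizer
of `γ τ` in `G` equals the stabilizer of `γ 0`. -/
theorem stabilizer_constant_along_integral_curve
    {EG : Type*} [NormedAddCommGroup EG] [NormedSpace ℝ EG]
    {HG : Type*} [TopologicalSpace HG] {IG : ModelWithCorners ℝ EG HG}
    {G : Type*} [TopologicalSpace G] [ChartedSpace HG G] [Group G]
    [IsManifold IG (⊤ : ℕ∞) G] [LieGroup IG (⊤ : ℕ∞) G]
    {EM : Type*} [NormedAddCommGroup EM] [NormedSpace ℝ EM]
    {HM : Type*} [TopologicalSpace HM] {IM : ModelWithCorners ℝ EM HM}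
    {M : Type*} [TopologicalSpace M] [ChartedSpace HM M] [IsManifold IM (⊤ : ℕ∞) M]
    [T2Space M] [BoundarylessManifold IM M]
    [MulAction G M]
    (hact : ContMDiff (IG.prod IM) IM (⊤ : ℕ∞) fun p : G × M => p.1 • p.2)
    (X : (x : M) → TangentSpace IM x)
    (hX_smooth : ContMDiff IM IM.tangent (⊤ : ℕ∞)
      fun x : M => (⟨x, X x⟩ : TangentBundle IM M))
    (hX_equiv : ∀ (g : G) (p : M), X (g • p) = mfderiv IM IM (fun q : M => g • q) p (X p))
    (γ : ℝ → M) (hγ : IsMIntegralCurve γ X) :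
    ∀ τ : ℝ, MulAction.stabilizer G (γ τ) = MulAction.stabilizer G (γ 0) :=
  stabilizer_constant_along_integral_curve_general hact X hX_smooth hX_equiv γ hγ
end

section
/- Let G be a Lie group acting smoothly on a smooth manifold M, with Lie algebra 𝔤 := T₁G. Then the infinitesimal action a : 𝔤 × M → TM, defined by a(ξ, m) := T ev_m(ξ) ∈ T_mM (a tangent vector based at m), is a smooth map from the product manifold 𝔤 × M to the total space of the tangent bundle TM. -/
open scoped Manifold
open Bundle Function Topology

/-! Read in a chart of `TM` around `m₀`, `a(ξ, m)` is the partial derivative at the fixed point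
`g = 1` of the jointly smooth map `(m, g) ↦ g • m`, applied to `ξ`. Because the point `1` does not
move, no chart change on `G` intervenes, so this partial derivative is a smooth `EG →L EM`-valued
function of `m`, and evaluating it at `ξ` keeps the dependence on `(ξ, m)` smooth. -/

section ParametrizedDerivative

variable {𝕜 : Type*} [NontriviallyNormedField 𝕜] {m n : WithTop ℕ∞}
  {E : Type*} [NormedAddCommGroup E] [NormedSpace 𝕜 E]
  {H : Type*} [TopologicalSpace H] {I : ModelWithCorners 𝕜 E H}
  {M : Type*} [TopologicalSpace M] [ChartedSpace H M] [IsManifold I 1 M]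
  {E' : Type*} [NormedAddCommGroup E'] [NormedSpace 𝕜 E']
  {H' : Type*} [TopologicalSpace H'] {I' : ModelWithCorners 𝕜 E' H'}
  {M' : Type*} [TopologicalSpace M'] [ChartedSpace H' M'] [IsManifold I' 1 M']
  {F : Type*} [NormedAddCommGroup F] [NormedSpace 𝕜 F]
  {G : Type*} [TopologicalSpace G] {J : ModelWithCorners 𝕜 F G}
  {N : Type*}

theorem inTangentCoordinates_const_eq (y₀ : M) (g : N → M') (ϕ : N → E →L[𝕜] E') {x₀ x : N}
    (hx : g x ∈ (chartAt H' (g x₀)).source) :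
    inTangentCoordinates I I' (fun _ ↦ y₀) g ϕ x₀ x =
      (tangentBundleCore I' M').coordChange (achart H' (g x)) (achart H' (g x₀)) (g x) ∘L ϕ x := by
  rw [inTangentCoordinates_eq _ _ _ (mem_chart_source H y₀) hx]
  ext v
  simp only [ContinuousLinearMap.comp_apply]
  rw [(tangentBundleCore I M).coordChange_self _ _ (mem_chart_source H y₀)]

variable [TopologicalSpace N] [ChartedSpace G N] [IsManifold J 1 N]

theorem ContMDiffAt.contMDiffAt_mfderiv_const_point {f : N → M → M'} {y₀ : M} {x₀ : N}
    (hf : ContMDiffAt (J.prod I) I' n (uncurry f) (x₀, y₀)) (hmn : m + 1 ≤ n) (v₀ : E) :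
    ContMDiffAt (𝓘(𝕜, E).prod J) I'.tangent m
      (fun p : E × N ↦ (⟨f p.2 y₀, mfderiv I I' (f p.2) y₀ p.1⟩ : TangentBundle I' M'))
      (v₀, x₀) := by
  rw [contMDiffAt_totalSpace]
  have hbase : ContMDiffAt (𝓘(𝕜, E).prod J) I' n (fun p : E × N ↦ f p.2 y₀) (v₀, x₀) :=
    hf.comp (v₀, x₀) (contMDiffAt_snd.prodMk contMDiffAt_const)
  refine ⟨?_, ?_⟩
  · exact hbase.of_le (le_self_add.trans hmn)
  · have hcoord := ContMDiffAt.mfderiv_apply (J' := 𝓘(𝕜, E).prod J) (x₀ := (v₀, x₀))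
      f (fun _ ↦ y₀) Prod.snd Prod.fst hf contMDiffAt_const contMDiffAt_snd contMDiffAt_fst hmn
    refine hcoord.congr_of_eventuallyEq ?_
    have hchart : ∀ᶠ p : E × N in 𝓝 (v₀, x₀), f p.2 y₀ ∈ (chartAt H' (f x₀ y₀)).source :=
      hbase.continuousAt.eventually_mem
        ((chartAt H' (f x₀ y₀)).open_source.mem_nhds (mem_chart_source H' _))
    filter_upwards [hchart] with p hp
    rw [inTangentCoordinates_const_eq (I := I) (I' := I') y₀ (fun x ↦ f x y₀)
      (fun x ↦ mfderiv I I' (f x) y₀) hp]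
    rfl

end ParametrizedDerivative

theorem infinitesimal_action_smooth_general
    {EG : Type*} [NormedAddCommGroup EG] [NormedSpace ℝ EG]
    {HG : Type*} [TopologicalSpace HG] {IG : ModelWithCorners ℝ EG HG}
    {G : Type*} [TopologicalSpace G] [ChartedSpace HG G] [Group G]
    [IsManifold IG (⊤ : ℕ∞) G]
    {EM : Type*} [NormedAddCommGroup EM] [NormedSpace ℝ EM]
    {HM : Type*} [TopologicalSpace HM] {IM : ModelWithCorners ℝ EM HM}
    {M : Type*} [TopologicalSpace M] [ChartedSpace HM M] [IsManifold IM (⊤ : ℕ∞) M]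
    [MulAction G M]
    (hact : ContMDiff (IG.prod IM) IM (⊤ : ℕ∞) fun p : G × M => p.1 • p.2) :
    ContMDiff ((𝓘(ℝ, EG)).prod IM) IM.tangent (⊤ : ℕ∞)
      (fun p : EG × M =>
        (⟨p.2, mfderiv IG IM (fun g : G => g • p.2) (1 : G) p.1⟩ : TangentBundle IM M)) := by
  rintro ⟨ξ, x⟩
  have hact' : ContMDiff (IM.prod IG) IM (⊤ : ℕ∞) (uncurry fun (x : M) (g : G) ↦ g • x) :=
    hact.comp (contMDiff_snd.prodMk contMDiff_fst)
  have h := (hact' (x, 1)).contMDiffAt_mfderiv_const_point (m := (⊤ : ℕ∞)) (by simp) ξ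
  convert h using 3 with p
  congr 1
  exact (one_smul G p.2).symm

/-- Let `G` be a Lie group acting smoothly on a smooth manifold `M`, with Lie
algebra `𝔤 = T₁G`.  Then the infinitesimal action `a : 𝔤 × M → TM`, sending `(ξ, m)` to the
tangent vector `T ev_m (ξ) ∈ T_mM` based at `m`, is a smooth map from the product manifold
`𝔤 × M` to the total space of the tangent bundle `TM`. -/
theorem infinitesimal_action_smooth
    {EG : Type*} [NormedAddCommGroup EG] [NormedSpace ℝ EG]
    {HG : Type*} [TopologicalSpace HG] {IG : ModelWithCorners ℝ EG HG}
    {G : Type*} [TopologicalSpace G] [ChartedSpace HG G] [Group G]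
    [IsManifold IG (⊤ : ℕ∞) G] [LieGroup IG (⊤ : ℕ∞) G]
    {EM : Type*} [NormedAddCommGroup EM] [NormedSpace ℝ EM]
    {HM : Type*} [TopologicalSpace HM] {IM : ModelWithCorners ℝ EM HM}
    {M : Type*} [TopologicalSpace M] [ChartedSpace HM M] [IsManifold IM (⊤ : ℕ∞) M]
    [MulAction G M]
    (hact : ContMDiff (IG.prod IM) IM (⊤ : ℕ∞) fun p : G × M => p.1 • p.2) :
    ContMDiff ((𝓘(ℝ, EG)).prod IM) IM.tangent (⊤ : ℕ∞)
      (fun p : EG × M =>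
        (⟨p.2, mfderiv IG IM (fun g : G => g • p.2) (1 : G) p.1⟩ : TangentBundle IM M)) :=
  infinitesimal_action_smooth_general hact
end
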